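/- Let m ≥ 1 and let a < b be real numbers. Let S = {x ∈ ℝ^m : a ≤ x_m ≤ b} be the closed slab. Suppose E : ℝ^m → ℝ is bounded on S, continuous on S, C² on the open slab {x : a < x_m < b} with ΔE = −1 there, and E = 0 at every point of the two hyperplanes {x_m = a} and {x_m = b}. Then E(x) = (1/2)(x_m − a)(b − x_m) for every x ∈ S. (The slab is Dirichlet parabolic, so this explicit function is its unique bounded Dirichlet mean exit time.) -/

import Mathlib

/-!
Subtracting `½ (x_j - a)(b - x_j)`, whose Laplacian is `-1`, reduces the claim to a Liouville
theorem: a bounded `u`, continuous on the closed slab, harmonic inside and vanishing on the two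
hyperplanes, is zero. Fix `x₀` in the slab; `h(x) = ‖x - x₀‖² + (m + 1)(x_j - a)(b - x_j)` has
`Δh = -2`. If `|u| ≤ M` and `k R² = M`, then `k h ± u` is strictly superharmonic on the slab
truncated to the ball `B(x₀, R)` and nonnegative on its boundary (`k h ≥ M` on the sphere, `u = 0`
on the hyperplanes), so it is nonnegative throughout, because at an interior minimum every second
directional derivative, hence `Δ`, is nonnegative. At `x₀` this reads
`|u(x₀)| ≤ k (m + 1)(x₀_j - a)(b - x₀_j)`, for every `k > 0`.
-/

/-- The Euclidean Laplacian `Δu(x) = ∑ i, ∂²u/∂xᵢ²(x)`. -/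
noncomputable def lap {n : ℕ} (u : EuclideanSpace ℝ (Fin n) → ℝ)
    (x : EuclideanSpace ℝ (Fin n)) : ℝ :=
  ∑ i : Fin n,
    fderiv ℝ (fun y => fderiv ℝ u y (EuclideanSpace.single i 1)) x (EuclideanSpace.single i 1)

open Filter Topology InnerProductSpace Laplacian

theorem IsLocalMin.deriv_deriv_nonneg {φ : ℝ → ℝ} {t₀ : ℝ} (hmin : IsLocalMin φ t₀)
    (hc : ContinuousAt φ t₀) : 0 ≤ deriv (deriv φ) t₀ := by
  by_contra! hneg
  -- otherwise `t₀` is also a local maximum, so `φ` is constant near `t₀`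
  have hconst : φ =ᶠ[𝓝 t₀] fun _ => φ t₀ :=
    ((isLocalMax_of_deriv_deriv_neg hneg hmin.deriv_eq_zero hc).and hmin).mono
      fun t ht => le_antisymm ht.1 ht.2
  have : deriv φ =ᶠ[𝓝 t₀] fun _ => 0 :=
    hconst.eventuallyEq_nhds.mono fun t ht => by rw [ht.deriv_eq, deriv_const]
  rw [this.deriv_eq, deriv_const] at hneg
  exact hneg.false

section
variable {E : Type*} [NormedAddCommGroup E] [NormedSpace ℝ E]

theorem IsLocalMin.iteratedFDeriv_two_nonneg {v : E → ℝ} {p : E} (hmin : IsLocalMin v p)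
    (hv : ContDiffAt ℝ 2 v p) (e : E) : 0 ≤ iteratedFDeriv ℝ 2 v p ![e, e] := by
  set line : ℝ → E := fun s => p + s • e
  have hline : ∀ t : ℝ, HasDerivAt line e t := fun t => by
    simpa only [id, one_smul] using ((hasDerivAt_id t).smul_const e).const_add p
  have hline0 : Tendsto line (𝓝 0) (𝓝 p) := by simpa [line] using (hline 0).continuousAt.tendsto
  have hnear : ∀ᶠ t in 𝓝 (0 : ℝ), DifferentiableAt ℝ v (line t) :=
    hline0.eventually <| (hv.eventually (by simp)).mono fun y hy => hy.differentiableAt (by simp)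
  have hderiv : deriv (v ∘ line) =ᶠ[𝓝 0] fun t => fderiv ℝ v (line t) e :=
    hnear.mono fun t ht => (ht.hasFDerivAt.comp_hasDerivAt t (hline t)).deriv
  have hsecond : HasDerivAt (fun t => fderiv ℝ v (line t) e) (fderiv ℝ (fderiv ℝ v) p e e) 0 := by
    have h2 : DifferentiableAt ℝ (fderiv ℝ v) (line 0) := by
      simpa [line] using (hv.fderiv_right (m := 1) (by norm_num)).differentiableAt (by norm_num)
    simpa [line] using (h2.hasFDerivAt.comp_hasDerivAt 0 (hline 0)).clm_apply (hasDerivAt_const 0 e)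
  have hmin' : IsLocalMin (v ∘ line) 0 := by
    simpa [line] using (show IsLocalMin v (line 0) by simpa [line] using hmin).comp_continuous
      (hline 0).continuousAt
  have := hmin'.deriv_deriv_nonneg
    (hv.continuousAt.comp_of_eq (hline 0).continuousAt (by simp [line]))
  rw [hderiv.deriv_eq, hsecond.deriv] at this
  simpa [iteratedFDeriv_two_apply] using this
end

section
variable {E : Type*} [NormedAddCommGroup E] [InnerProductSpace ℝ E] [FiniteDimensional ℝ E]

theorem IsLocalMin.laplacian_nonneg {v : E → ℝ} {p : E} (hmin : IsLocalMin v p)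
    (hv : ContDiffAt ℝ 2 v p) : 0 ≤ Δ v p := by
  rw [laplacian_eq_iteratedFDeriv_stdOrthonormalBasis]
  exact Finset.sum_nonneg fun i _ => hmin.iteratedFDeriv_two_nonneg hv _

theorem nonneg_of_laplacian_neg {K U : Set E} {v : E → ℝ} (hK : IsCompact K) (hU : IsOpen U)
    (hUK : U ⊆ K) (hcont : ContinuousOn v K) (hv : ContDiffOn ℝ 2 v U)
    (hΔ : ∀ x ∈ U, Δ v x < 0) (hbdry : ∀ x ∈ K \ U, 0 ≤ v x) {x : E} (hx : x ∈ K) :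
    0 ≤ v x := by
  obtain ⟨p, hpK, hpmin⟩ := hK.exists_isMinOn ⟨x, hx⟩ hcont
  refine (?_ : 0 ≤ v p).trans (hpmin hx)
  by_cases hpU : p ∈ U
  · have hloc : IsLocalMin v p := hpmin.isLocalMin (mem_of_superset (hU.mem_nhds hpU) hUK)
    exact absurd (hloc.laplacian_nonneg (hv.contDiffAt (hU.mem_nhds hpU))) (hΔ p hpU).not_ge
  · exact hbdry p ⟨hpK, hpU⟩

theorem laplacian_eq_of_hasFDerivAt_affine {u : E → ℝ} {A : E →L[ℝ] E →L[ℝ] ℝ} {c : E →L[ℝ] ℝ}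
    (hu : ∀ y, HasFDerivAt u (A y + c) y) {ι : Type*} [Fintype ι] (b : OrthonormalBasis ι ℝ E)
    (x : E) : Δ u x = ∑ i, A (b i) (b i) := by
  have hfderiv : fderiv ℝ u = fun y => A y + c := funext fun y => (hu y).fderiv
  simp [laplacian_eq_iteratedFDeriv_orthonormalBasis u b, iteratedFDeriv_two_apply, hfderiv,
    (A.hasFDerivAt.add_const c).fderiv]

theorem laplacian_norm_sub_sq (x₀ x : E) :
    Δ (fun y => ‖y - x₀‖ ^ 2) x = 2 * Module.finrank ℝ E := by
  have hu : ∀ y, HasFDerivAt (fun y => ‖y - x₀‖ ^ 2)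
      ((2 • (innerSL ℝ : E →L[ℝ] E →L[ℝ] ℝ)) y + -(2 • innerSL ℝ x₀)) y := fun y => by
    refine ((hasFDerivAt_id y).sub_const x₀).norm_sq.congr_fderiv ?_
    ext v
    simp
    ring
  have hA : ∀ v : E, (2 • (innerSL ℝ : E →L[ℝ] E →L[ℝ] ℝ)) v v = 2 * ‖v‖ ^ 2 := fun v => by
    simp
  rw [laplacian_eq_of_hasFDerivAt_affine hu (stdOrthonormalBasis ℝ E)]
  simp only [hA, OrthonormalBasis.norm_eq_one]
  simp [mul_comm]
end

theorem lap_eq_laplacian {n : ℕ} {u : EuclideanSpace ℝ (Fin n) → ℝ} {x : EuclideanSpace ℝ (Fin n)}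
    (hu : ContDiffAt ℝ 2 u x) : lap u x = Δ u x := by
  have h2 : DifferentiableAt ℝ (fderiv ℝ u) x :=
    (hu.fderiv_right (m := 1) (by norm_num)).differentiableAt (by norm_num)
  rw [laplacian_eq_iteratedFDeriv_orthonormalBasis u (EuclideanSpace.basisFun (Fin n) ℝ), lap]
  refine Finset.sum_congr rfl fun i _ => ?_
  simp [fderiv_clm_apply h2 (differentiableAt_const _), iteratedFDeriv_two_apply]

section

variable {ι : Type*} (j : ι) (a b : ℝ)

def slab : Set (EuclideanSpace ℝ ι) := {x | a ≤ x j ∧ x j ≤ b}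

def openSlab : Set (EuclideanSpace ℝ ι) := {x | a < x j ∧ x j < b}

def slabProfile (x : EuclideanSpace ℝ ι) : ℝ := (x j - a) * (b - x j)

theorem openSlab_subset_slab : (openSlab j a b : Set (EuclideanSpace ℝ ι)) ⊆ slab j a b :=
  fun _ hx => ⟨hx.1.le, hx.2.le⟩

theorem isClosed_slab : IsClosed (slab j a b : Set (EuclideanSpace ℝ ι)) :=
  have hcoord : Continuous fun x : EuclideanSpace ℝ ι => x j := by fun_prop
  (isClosed_le continuous_const hcoord).inter (isClosed_le hcoord continuous_const)

theorem isOpen_openSlab : IsOpen (openSlab j a b : Set (EuclideanSpace ℝ ι)) :=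
  have hcoord : Continuous fun x : EuclideanSpace ℝ ι => x j := by fun_prop
  (isOpen_lt continuous_const hcoord).inter (isOpen_lt hcoord continuous_const)

theorem slabProfile_nonneg {x : EuclideanSpace ℝ ι} (hx : x ∈ slab j a b) :
    0 ≤ slabProfile j a b x :=
  mul_nonneg (sub_nonneg.2 hx.1) (sub_nonneg.2 hx.2)

theorem slabProfile_le (x : EuclideanSpace ℝ ι) : slabProfile j a b x ≤ (b - a) ^ 2 / 4 := by
  unfold slabProfile; nlinarith [sq_nonneg (a + b - 2 * x j)]

theorem slabProfile_eq_zero {x : EuclideanSpace ℝ ι} (hx : x j = a ∨ x j = b) :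
    slabProfile j a b x = 0 := by
  rcases hx with h | h <;> simp [slabProfile, h]

variable [Fintype ι]

noncomputable def slabBarrier (x₀ x : EuclideanSpace ℝ ι) : ℝ :=
  ‖x - x₀‖ ^ 2 + (Fintype.card ι + 1) * slabProfile j a b x

theorem contDiff_slabProfile : ContDiff ℝ 2 (slabProfile (ι := ι) j a b) := by
  unfold slabProfile; fun_prop

theorem contDiff_slabBarrier (x₀ : EuclideanSpace ℝ ι) : ContDiff ℝ 2 (slabBarrier j a b x₀) :=
  (contDiff_norm_sq ℝ).comp (contDiff_id.sub contDiff_const) |>.add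
    (contDiff_const.mul (contDiff_slabProfile j a b))

theorem laplacian_slabProfile (x : EuclideanSpace ℝ ι) : Δ (slabProfile j a b) x = -2 := by
  classical
  set π : EuclideanSpace ℝ ι →L[ℝ] ℝ := EuclideanSpace.proj j
  have hu : ∀ y, HasFDerivAt (slabProfile j a b) ((-2 • π.smulRight π) y + (a + b) • π) y :=
    fun y => by
      refine ((π.hasFDerivAt.sub_const a).mul (π.hasFDerivAt.const_sub b)).congr_fderiv ?_
      ext v
      simp [π]
      ring
  rw [laplacian_eq_of_hasFDerivAt_affine hu (EuclideanSpace.basisFun ι ℝ)]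
  simp only [smul_apply, ContinuousLinearMap.smulRight_apply,
    EuclideanSpace.basisFun_apply, π, PiLp.proj_apply, PiLp.single_apply]
  simp

theorem laplacian_slabBarrier (x₀ x : EuclideanSpace ℝ ι) : Δ (slabBarrier j a b x₀) x = -2 := by
  have hnorm : ContDiffAt ℝ 2 (fun y : EuclideanSpace ℝ ι => ‖y - x₀‖ ^ 2) x :=
    ((contDiff_norm_sq ℝ).comp (contDiff_id.sub contDiff_const)).contDiffAt
  have hprofile := (contDiff_slabProfile j a b).contDiffAt (x := x)
  have hsplit : slabBarrier j a b x₀ =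
      (fun y => ‖y - x₀‖ ^ 2) + ((Fintype.card ι : ℝ) + 1) • slabProfile j a b := rfl
  have hscaled : ContDiffAt ℝ 2 (((Fintype.card ι : ℝ) + 1) • slabProfile j a b) x :=
    contDiffAt_const.smul hprofile
  rw [hsplit, hnorm.laplacian_add hscaled, laplacian_smul _ hprofile,
    laplacian_norm_sub_sq, laplacian_slabProfile, finrank_euclideanSpace, smul_eq_mul]
  ring

variable {j a b}

theorem norm_sub_sq_le_slabBarrier {x₀ x : EuclideanSpace ℝ ι} (hx : x ∈ slab j a b) :
    ‖x - x₀‖ ^ 2 ≤ slabBarrier j a b x₀ x :=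
  le_add_of_nonneg_right (mul_nonneg (by positivity) (slabProfile_nonneg j a b hx))

theorem mul_slabBarrier_add_mul_nonneg {u : EuclideanSpace ℝ ι → ℝ} {M k R σ : ℝ}
    (hM : ∀ x ∈ slab j a b, |u x| ≤ M) (hcont : ContinuousOn u (slab j a b))
    (hu : ContDiffOn ℝ 2 u (openSlab j a b)) (hΔ : ∀ x ∈ openSlab j a b, Δ u x = 0)
    (hzero : ∀ x, x j = a ∨ x j = b → u x = 0)
    (hk : 0 < k) (hR : 0 ≤ R) (hMR : M ≤ k * R ^ 2) (hσ : |σ| ≤ 1)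
    {x₀ : EuclideanSpace ℝ ι} (hx₀ : x₀ ∈ slab j a b) :
    0 ≤ k * slabBarrier j a b x₀ x₀ + σ * u x₀ := by
  have hbarrier := contDiff_slabBarrier j a b x₀
  refine nonneg_of_laplacian_neg (K := Metric.closedBall x₀ R ∩ slab j a b)
    (U := Metric.ball x₀ R ∩ openSlab j a b) (v := k • slabBarrier j a b x₀ + σ • u)
    ((isCompact_closedBall x₀ R).inter_right (isClosed_slab j a b))
    (Metric.isOpen_ball.inter (isOpen_openSlab j a b))
    (Set.inter_subset_inter Metric.ball_subset_closedBall (openSlab_subset_slab j a b))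
    ((hbarrier.continuous.continuousOn.const_smul k).add
      ((hcont.mono Set.inter_subset_right).const_smul σ))
    ((hbarrier.contDiffOn.const_smul k).add ((hu.mono Set.inter_subset_right).const_smul σ))
    ?_ ?_ ⟨Metric.mem_closedBall_self hR, hx₀⟩
  · rintro x ⟨-, hx⟩
    have hux : ContDiffAt ℝ 2 u x := hu.contDiffAt ((isOpen_openSlab j a b).mem_nhds hx)
    have hbx : ContDiffAt ℝ 2 (slabBarrier j a b x₀) x := hbarrier.contDiffAt
    have hkb : ContDiffAt ℝ 2 (k • slabBarrier j a b x₀) x := contDiffAt_const.smul hbx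
    have hσu : ContDiffAt ℝ 2 (σ • u) x := contDiffAt_const.smul hux
    rw [hkb.laplacian_add hσu, laplacian_smul _ hbx,
      laplacian_smul _ hux, laplacian_slabBarrier, hΔ x hx]
    simpa using hk
  · rintro x ⟨⟨-, hxS⟩, hxU⟩
    by_cases hxR : x ∈ Metric.ball x₀ R
    · have hedge : x j = a ∨ x j = b := by
        by_contra! h
        exact hxU ⟨hxR, lt_of_le_of_ne hxS.1 h.1.symm, lt_of_le_of_ne hxS.2 h.2⟩
      simpa [hzero x hedge] using mul_nonneg hk.le
        ((sq_nonneg _).trans (norm_sub_sq_le_slabBarrier hxS))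
    · have hfar : M ≤ k * slabBarrier j a b x₀ x := by
        refine hMR.trans (mul_le_mul_of_nonneg_left ?_ hk.le)
        refine (pow_le_pow_left₀ hR ?_ 2).trans (norm_sub_sq_le_slabBarrier hxS)
        simpa [dist_eq_norm] using hxR
      have hnear : -(σ * u x) ≤ M := by
        refine (neg_le_abs _).trans ?_
        rw [abs_mul]
        exact (mul_le_of_le_one_left (abs_nonneg _) hσ).trans (hM x hxS)
      simp only [Pi.add_apply, Pi.smul_apply, smul_eq_mul]
      linarith

theorem eq_zero_of_laplacian_eq_zero_on_slab {u : EuclideanSpace ℝ ι → ℝ}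
    (hbd : ∃ M, ∀ x ∈ slab j a b, |u x| ≤ M) (hcont : ContinuousOn u (slab j a b))
    (hu : ContDiffOn ℝ 2 u (openSlab j a b)) (hΔ : ∀ x ∈ openSlab j a b, Δ u x = 0)
    (hzero : ∀ x, x j = a ∨ x j = b → u x = 0) {x₀ : EuclideanSpace ℝ ι}
    (hx₀ : x₀ ∈ slab j a b) : u x₀ = 0 := by
  obtain ⟨M, hM⟩ := hbd
  set c := slabBarrier j a b x₀ x₀
  have hc : 0 ≤ c := (sq_nonneg _).trans (norm_sub_sq_le_slabBarrier hx₀)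
  have hsmall : ∀ k > 0, |u x₀| ≤ k * c := fun k hk => by
    have hMk : 0 ≤ M / k := div_nonneg ((abs_nonneg _).trans (hM x₀ hx₀)) hk.le
    have hMR : M ≤ k * √(M / k) ^ 2 := by
      rw [Real.sq_sqrt hMk, mul_div_cancel₀ M hk.ne']
    have hup := mul_slabBarrier_add_mul_nonneg hM hcont hu hΔ hzero hk (Real.sqrt_nonneg _) hMR
      (σ := -1) (by simp) hx₀
    have hlow := mul_slabBarrier_add_mul_nonneg hM hcont hu hΔ hzero hk (Real.sqrt_nonneg _) hMR
      (σ := 1) (by simp) hx₀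
    rw [abs_le]
    constructor <;> linarith
  by_contra hne
  have hpos : 0 < |u x₀| := abs_pos.mpr hne
  have h := hsmall (|u x₀| / (c + 1)) (by positivity)
  rw [div_mul_eq_mul_div, le_div_iff₀ (by positivity)] at h
  nlinarith

end

/-- The bounded Dirichlet mean exit time of the slab `{x ∈ ℝ^m : a ≤ x_m ≤ b}` is the explicit
function `(1/2)(x_m - a)(b - x_m)`: any bounded continuous function on the closed slab which is
`C²` with `ΔE = -1` on the open slab and vanishes on the two boundary hyperplanes equals it. -/
theorem slab_mean_exit_time (m : ℕ) (a b : ℝ)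
    (j : Fin m)
    (E : EuclideanSpace ℝ (Fin m) → ℝ)
    (hbd : ∃ C : ℝ, ∀ x ∈ {x : EuclideanSpace ℝ (Fin m) | a ≤ x j ∧ x j ≤ b}, |E x| ≤ C)
    (hcont : ContinuousOn E {x : EuclideanSpace ℝ (Fin m) | a ≤ x j ∧ x j ≤ b})
    (hC2 : ContDiffOn ℝ 2 E {x : EuclideanSpace ℝ (Fin m) | a < x j ∧ x j < b})
    (hlap : ∀ x : EuclideanSpace ℝ (Fin m), a < x j → x j < b → lap E x = -1)
    (hzero : ∀ x : EuclideanSpace ℝ (Fin m), x j = a ∨ x j = b → E x = 0) :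
    ∀ x ∈ {x : EuclideanSpace ℝ (Fin m) | a ≤ x j ∧ x j ≤ b},
      E x = (1 / 2) * (x j - a) * (b - x j) := by
  intro x hx
  have hq : ContDiff ℝ 2 (slabProfile j a b) := contDiff_slabProfile j a b
  have hhalf : ContDiff ℝ 2 ((1 / 2 : ℝ) • slabProfile j a b) := contDiff_const.smul hq
  have hE : ∀ y ∈ openSlab j a b, ContDiffAt ℝ 2 E y := fun y hy =>
    hC2.contDiffAt ((isOpen_openSlab j a b).mem_nhds hy)
  have hharmonic := eq_zero_of_laplacian_eq_zero_on_slab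
    (u := E - (1 / 2 : ℝ) • slabProfile j a b) ?_ (hcont.sub hhalf.continuous.continuousOn)
    (hC2.sub hhalf.contDiffOn) (fun y hy => ?_) (fun y hy => ?_) hx
  · simp only [Pi.sub_apply, Pi.smul_apply, smul_eq_mul, slabProfile] at hharmonic
    linarith
  · obtain ⟨C, hC⟩ := hbd
    refine ⟨C + (b - a) ^ 2 / 8, fun y hy => ?_⟩
    have hEy := abs_le.mp (hC y hy)
    have hqy₀ := slabProfile_nonneg j a b hy
    have hqy₁ := slabProfile_le j a b y
    simp only [Pi.sub_apply, Pi.smul_apply, smul_eq_mul, abs_le]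
    constructor <;> linarith
  · rw [(hE y hy).laplacian_sub hhalf.contDiffAt, laplacian_smul _ hq.contDiffAt,
      laplacian_slabProfile, ← lap_eq_laplacian (hE y hy), hlap y hy.1 hy.2]
    norm_num
  · simp [hzero y hy, slabProfile_eq_zero j a b hy]
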